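/- Fix q ∈ (-1,1), s > 0 and x with |x| < 2√(s/(1-q)). For 0 ≤ t₁ < t₂ and y₁, y₂ ∈ ℝ, the rescaled q-Brownian-motion transition density satisfies lim_{ε↓0} ε · κ⁽q⁾_{s+t₁ε, s+t₂ε}(x + y₁ε, x + y₂ε) = (1/(2π)) √(1-q)(t₂-t₁)√(4s-(1-q)x²) / [(t₂-t₁)² + (1-q)(s(y₂-y₁)² - (t₂-t₁)(y₂-y₁)x)]. -/

import Mathlib

/-- φ*_{q,k}(t₁,t₂,y₁,y₂) from the q-Brownian-motion transition density. -/
noncomputable def phiStar (q : ℝ) (k : ℕ) (t₁ t₂ y₁ y₂ : ℝ) : ℝ :=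
  (t₂ - t₁*q^(2*k))^2 - (1-q)*q^k*(t₂ + t₁*q^(2*k))*y₁*y₂
    + (1-q)*(t₁*y₂^2 + t₂*y₁^2)*q^(2*k)

/-- ψ*_{q,k}(t₁,t₂,y₂) from the q-Brownian-motion transition density. -/
noncomputable def psiStar (q : ℝ) (k : ℕ) (t₁ t₂ y₂ : ℝ) : ℝ :=
  (t₂ - t₁*q^k) * (1 - q^(k+1)) * (t₂*(1+q^k)^2 - (1-q)*y₂^2*q^k)

/-- Transition density κ⁽q⁾_{t₁,t₂}(y₁,y₂) of the q-Brownian motion. -/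
noncomputable def kappaQ (q t₁ t₂ y₁ y₂ : ℝ) : ℝ :=
  (1-q) ^ ((3:ℝ)/2) * (t₂-t₁) / (2*Real.pi)
    * (Real.sqrt (4*t₂ - (1-q)*y₂^2) / phiStar q 0 t₁ t₂ y₁ y₂)
    * ∏' k : ℕ, psiStar q (k+1) t₁ t₂ y₂ / phiStar q (k+1) t₁ t₂ y₁ y₂

/-!
After the substitution, `t₂' - t₁' = (t₂ - t₁) ε` and `φ*_{q,0}` is `ε²` times a quantity
tending to the denominator of the limit, so the prefactor of `ε κ` converges by continuity.
For the infinite product, replace `q^k` by a free variable `Q ∈ [-|q|, |q|]`. At `ε = 0` both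
`ψ*` and `φ*` are positive on this compact interval, so by the tube lemma they stay above a fixed
`c > 0` for all small `ε`; since `ψ* - φ*` is divisible by `Q`, this gives
`|log (ψ*/φ*)| ≤ C |q|^k` uniformly in small `ε`. Dominated convergence for the sum of the
logarithms lets the product pass to the limit, where its factors are
`(1 - q^(k+2)) / (1 - q^(k+1))` and telescope to `1 / (1 - q)`.
-/

open Filter Topology Set Real Finset

section Tube

variable {X Y α : Type*} [TopologicalSpace X] [TopologicalSpace Y]
  [LinearOrder α] [TopologicalSpace α] [OrderTopology α] {K : Set Y} {x₀ : X} {m : X × Y → α}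

theorem IsCompact.eventually_forall_lt (hK : IsCompact K) (hm : Continuous m) {a : α}
    (ha : ∀ y ∈ K, a < m (x₀, y)) : ∀ᶠ x in 𝓝 x₀, ∀ y ∈ K, a < m (x, y) :=
  hK.eventually_forall_of_forall_eventually fun y hy ↦
    hm.continuousAt.eventually (lt_mem_nhds (ha y hy))

theorem IsCompact.exists_eventually_forall_lt [DenselyOrdered α] [NoMaxOrder α]
    (hK : IsCompact K) (hm : Continuous m) {a : α} (ha : ∀ y ∈ K, a < m (x₀, y)) :
    ∃ a' > a, ∀ᶠ x in 𝓝 x₀, ∀ y ∈ K, a' < m (x, y) := by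
  obtain ⟨b, hab, hb⟩ := hK.exists_forall_le' (by fun_prop) ha
  obtain ⟨a', haa', ha'b⟩ := exists_between hab
  exact ⟨a', haa', hK.eventually_forall_lt hm fun y hy ↦ ha'b.trans_le (hb y hy)⟩

theorem IsCompact.exists_eventually_forall_abs_le (hK : IsCompact K) {h : X × Y → ℝ}
    (hh : Continuous h) : ∃ M, ∀ᶠ x in 𝓝 x₀, ∀ y ∈ K, |h (x, y)| ≤ M := by
  obtain ⟨M, hM⟩ := hK.exists_bound_of_continuousOn (f := fun y ↦ h (x₀, y)) (by fun_prop)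
  refine ⟨M + 1, (hK.eventually_forall_lt (m := fun p ↦ -|h p|) (by fun_prop)
    (a := -(M + 1)) fun y hy ↦ ?_).mono fun x hx y hy ↦ ?_⟩
  · have := hM y hy
    rw [Real.norm_eq_abs] at this
    linarith
  · linarith [hx y hy]

end Tube

theorem Real.abs_log_div_le {a b c : ℝ} (hc : 0 < c) (ha : c ≤ a) (hb : c ≤ b) :
    |log (a / b)| ≤ |a - b| / c := by
  have ha0 : 0 < a := hc.trans_le ha
  have hb0 : 0 < b := hc.trans_le hb
  have hab : log (a / b) ≤ |a - b| / c := calc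
    log (a / b) ≤ a / b - 1 := log_le_sub_one_of_pos (by positivity)
    _ = (a - b) / b := by field_simp
    _ ≤ |a - b| / c := div_le_div₀ (abs_nonneg _) (le_abs_self _) hc hb
  have hba : log (b / a) ≤ |a - b| / c := calc
    log (b / a) ≤ b / a - 1 := log_le_sub_one_of_pos (by positivity)
    _ = (b - a) / a := by field_simp
    _ ≤ |a - b| / c := div_le_div₀ (abs_nonneg _) (abs_sub_comm a b ▸ le_abs_self _) hc ha
  rw [← inv_div, log_inv] at hba
  exact abs_le.2 ⟨by linarith, hab⟩

theorem tendsto_tprod_of_dominated_convergence {α : Type*} {l : Filter α} [l.NeBot]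
    {f : α → ℕ → ℝ} {g : ℕ → ℝ} {bound : ℕ → ℝ} {P : ℝ} (h_sum : Summable bound)
    (hg : ∀ k, 0 < g k) (hfg : ∀ k, Tendsto (f · k) l (𝓝 (g k)))
    (h_bound : ∀ᶠ a in l, ∀ k, 0 < f a k ∧ |log (f a k)| ≤ bound k)
    (hP : Tendsto (fun n ↦ ∏ k ∈ range n, g k) atTop (𝓝 P)) :
    Tendsto (fun a ↦ ∏' k, f a k) l (𝓝 P) := by
  have hlog k : Tendsto (fun a ↦ log (f a k)) l (𝓝 (log (g k))) :=
    ((continuousAt_log (hg k).ne').tendsto.comp (hfg k))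
  have hg_bound k : |log (g k)| ≤ bound k :=
    le_of_tendsto (hlog k).abs (h_bound.mono fun a h ↦ (h k).2)
  have hg_sum : Summable fun k ↦ log (g k) := .of_norm_bounded h_sum hg_bound
  have hgP : ∏' k, g k = P :=
    tendsto_nhds_unique (multipliable_of_summable_log hg hg_sum).tendsto_prod_tprod_nat hP
  rw [← hgP, ← rexp_tsum_eq_tprod hg hg_sum]
  refine (tendsto_tsum_of_dominated_convergence h_sum hlog
    (h_bound.mono fun a h k ↦ (h k).2)).rexp.congr' (h_bound.mono fun a h ↦ ?_)
  exact rexp_tsum_eq_tprod (fun k ↦ (h k).1)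
    (.of_norm_bounded h_sum fun k ↦ (h k).2)

theorem one_sub_pow_succ_pos {q : ℝ} (hq : |q| < 1) (k : ℕ) : 0 < 1 - q ^ (k + 1) := by
  have : |q ^ (k + 1)| < 1 := by rw [abs_pow]; exact pow_lt_one₀ (abs_nonneg q) hq (by omega)
  linarith [le_abs_self (q ^ (k + 1))]

theorem tendsto_prod_range_one_sub_pow_div {q : ℝ} (hq : |q| < 1) :
    Tendsto (fun n ↦ ∏ k ∈ range n, (1 - q ^ (k + 2)) / (1 - q ^ (k + 1))) atTop
      (𝓝 (1 - q)⁻¹) := by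
  have hpow (k : ℕ) : 1 - q ^ (k + 1) ≠ 0 := (one_sub_pow_succ_pos hq k).ne'
  have h1q : 1 - q ≠ 0 := by simpa using hpow 0
  have hprod (n : ℕ) :
      ∏ k ∈ range n, (1 - q ^ (k + 2)) / (1 - q ^ (k + 1)) = (1 - q ^ (n + 1)) / (1 - q) := by
    induction n with
    | zero => simpa using (div_self h1q).symm
    | succ n ih =>
      rw [prod_range_succ, ih]
      field_simp [hpow n]
  simp_rw [hprod]
  have hlim : Tendsto (fun n ↦ q ^ (n + 1)) atTop (𝓝 0) :=
    (tendsto_pow_atTop_nhds_zero_of_abs_lt_one hq).comp (tendsto_add_atTop_nat 1)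
  convert (hlim.const_sub 1).div_const (1 - q) using 2
  rw [sub_zero, one_div]

noncomputable def kappaFactor (q : ℝ) (k : ℕ) (t₁ t₂ y₁ y₂ : ℝ) : ℝ :=
  psiStar q (k + 1) t₁ t₂ y₂ / phiStar q (k + 1) t₁ t₂ y₁ y₂

def psiStarAt (q Q t₁ t₂ y₂ : ℝ) : ℝ :=
  (t₂ - t₁ * Q) * (1 - q * Q) * (t₂ * (1 + Q) ^ 2 - (1 - q) * y₂ ^ 2 * Q)

def phiStarAt (q Q t₁ t₂ y₁ y₂ : ℝ) : ℝ :=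
  (t₂ - t₁ * Q ^ 2) ^ 2 - (1 - q) * Q * (t₂ + t₁ * Q ^ 2) * y₁ * y₂
    + (1 - q) * (t₁ * y₂ ^ 2 + t₂ * y₁ ^ 2) * Q ^ 2

def psiPhiSlope (q Q t₁ t₂ y₁ y₂ : ℝ) : ℝ :=
  (t₁ * q * Q - t₁ - t₂ * q) * (t₂ * (1 + Q) ^ 2 - (1 - q) * y₂ ^ 2 * Q)
    + t₂ * (2 * t₂ - (1 - q) * y₂ ^ 2 + t₂ * Q)
    - (t₁ * Q * (t₁ * Q ^ 2 - 2 * t₂) - (1 - q) * (t₂ + t₁ * Q ^ 2) * y₁ * y₂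
      + (1 - q) * (t₁ * y₂ ^ 2 + t₂ * y₁ ^ 2) * Q)

section StarAt

variable (q Q t₁ t₂ y₁ y₂ : ℝ)

theorem psiStar_eq_psiStarAt (k : ℕ) : psiStar q k t₁ t₂ y₂ = psiStarAt q (q ^ k) t₁ t₂ y₂ := by
  rw [psiStar, psiStarAt, pow_succ']

theorem phiStar_eq_phiStarAt (k : ℕ) :
    phiStar q k t₁ t₂ y₁ y₂ = phiStarAt q (q ^ k) t₁ t₂ y₁ y₂ := by
  rw [phiStar, phiStarAt, pow_mul']

theorem psiStarAt_sub_phiStarAt :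
    psiStarAt q Q t₁ t₂ y₂ - phiStarAt q Q t₁ t₂ y₁ y₂ = Q * psiPhiSlope q Q t₁ t₂ y₁ y₂ := by
  rw [psiStarAt, phiStarAt, psiPhiSlope]; ring

theorem psiStarAt_self (s x : ℝ) :
    psiStarAt q Q s s x = s * (1 - Q) * (1 - q * Q) * (s * (1 + Q) ^ 2 - (1 - q) * x ^ 2 * Q) := by
  rw [psiStarAt]; ring

theorem phiStarAt_self (s x : ℝ) :
    phiStarAt q Q s s x x = s * (1 - Q) ^ 2 * (s * (1 + Q) ^ 2 - (1 - q) * x ^ 2 * Q) := by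
  rw [phiStarAt]; ring

end StarAt

theorem mul_one_add_sq_sub_mul_pos {s w Q : ℝ} (hs : 0 < s) (hw : 0 ≤ w) (hws : w < 4 * s)
    (hQ : -1 < Q) : 0 < s * (1 + Q) ^ 2 - w * Q := by
  rcases le_or_gt 0 Q with hQ0 | hQ0
  · nlinarith [mul_nonneg hs.le (sq_nonneg (1 - Q)), mul_le_mul_of_nonneg_right hws.le hQ0]
  · nlinarith [mul_pos hs (pow_pos (neg_lt_iff_pos_add'.mp hQ) 2),
      mul_nonneg hw (neg_nonneg.2 hQ0.le)]

theorem psiStarAt_self_pos {q s x Q : ℝ} (hq : |q| ≤ 1) (hs : 0 < s)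
    (hx : (1 - q) * x ^ 2 < 4 * s) (hQ : |Q| < 1) : 0 < psiStarAt q Q s s x := by
  obtain ⟨hQ₁, hQ₂⟩ := abs_lt.1 hQ
  have hqQ : q * Q < 1 := by
    have := mul_lt_one_of_nonneg_of_lt_one_left (abs_nonneg Q) hQ hq
    linarith [le_abs_self (q * Q), abs_mul q Q]
  have hW := mul_one_add_sq_sub_mul_pos hs (by nlinarith [abs_le.1 hq]) hx hQ₁
  have h1 : 0 < 1 - q * Q := by linarith
  have h2 : 0 < 1 - Q := by linarith
  rw [psiStarAt_self]
  positivity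

theorem phiStarAt_self_pos {q s x Q : ℝ} (hq : q ≤ 1) (hs : 0 < s)
    (hx : (1 - q) * x ^ 2 < 4 * s) (hQ : |Q| < 1) : 0 < phiStarAt q Q s s x x := by
  obtain ⟨hQ₁, hQ₂⟩ := abs_lt.1 hQ
  have hW := mul_one_add_sq_sub_mul_pos hs (by nlinarith) hx hQ₁
  have h1 : 0 < 1 - Q := by linarith
  rw [phiStarAt_self]
  positivity

theorem exists_eventually_abs_log_kappaFactor_le {q s x : ℝ} (hq : |q| < 1) (hs : 0 < s)
    (hx : (1 - q) * x ^ 2 < 4 * s) (t₁ t₂ y₁ y₂ : ℝ) :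
    ∃ C, ∀ᶠ ε in 𝓝 0, ∀ k,
      0 < kappaFactor q k (s + t₁ * ε) (s + t₂ * ε) (x + y₁ * ε) (x + y₂ * ε) ∧
      |log (kappaFactor q k (s + t₁ * ε) (s + t₂ * ε) (x + y₁ * ε) (x + y₂ * ε))|
        ≤ C * |q| ^ (k + 1) := by
  set ψ : ℝ × ℝ → ℝ := fun p ↦ psiStarAt q p.2 (s + t₁ * p.1) (s + t₂ * p.1) (x + y₂ * p.1)
  set φ : ℝ × ℝ → ℝ :=
    fun p ↦ phiStarAt q p.2 (s + t₁ * p.1) (s + t₂ * p.1) (x + y₁ * p.1) (x + y₂ * p.1)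
  have hK : IsCompact (Icc (-|q|) |q|) := isCompact_Icc
  have hK_abs {Q : ℝ} (hQ : Q ∈ Icc (-|q|) |q|) : |Q| < 1 := (abs_le.2 hQ).trans_lt hq
  have hpos : ∀ Q ∈ Icc (-|q|) |q|, 0 < min (ψ (0, Q)) (φ (0, Q)) := fun Q hQ ↦ by
    simp only [ψ, φ, mul_zero, add_zero]
    exact lt_min (psiStarAt_self_pos hq.le hs hx (hK_abs hQ))
      (phiStarAt_self_pos (abs_lt.1 hq).2.le hs hx (hK_abs hQ))
  have hψ : Continuous ψ := by simp only [ψ, psiStarAt]; fun_prop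
  have hφ : Continuous φ := by simp only [φ, phiStarAt]; fun_prop
  obtain ⟨c, hc, hψφ⟩ := hK.exists_eventually_forall_lt (m := fun p ↦ min (ψ p) (φ p))
    (by fun_prop) hpos
  obtain ⟨M, hM⟩ := hK.exists_eventually_forall_abs_le (x₀ := (0 : ℝ))
    (h := fun p ↦ psiPhiSlope q p.2 (s + t₁ * p.1) (s + t₂ * p.1) (x + y₁ * p.1) (x + y₂ * p.1))
    (by simp only [psiPhiSlope]; fun_prop)
  refine ⟨M / c, ?_⟩
  filter_upwards [hψφ, hM] with ε hcε hMε k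
  have hQ : q ^ (k + 1) ∈ Icc (-|q|) |q| := abs_le.1 <| by
    rw [abs_pow]; exact pow_le_of_le_one (abs_nonneg q) hq.le (by omega)
  obtain ⟨hcψ, hcφ⟩ := lt_min_iff.1 (hcε _ hQ)
  rw [kappaFactor, psiStar_eq_psiStarAt, phiStar_eq_phiStarAt]
  refine ⟨div_pos (hc.trans hcψ) (hc.trans hcφ), ?_⟩
  calc _ ≤ |ψ (ε, q ^ (k + 1)) - φ (ε, q ^ (k + 1))| / c := abs_log_div_le hc hcψ.le hcφ.le
    _ ≤ |q| ^ (k + 1) * M / c := by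
      rw [psiStarAt_sub_phiStarAt, abs_mul, abs_pow]
      gcongr
      exact hMε _ hQ
    _ = M / c * |q| ^ (k + 1) := by ring

theorem tendsto_kappaFactor_rescaled {q s x : ℝ} (hq : |q| < 1) (hs : 0 < s)
    (hx : (1 - q) * x ^ 2 < 4 * s) (t₁ t₂ y₁ y₂ : ℝ) (k : ℕ) :
    Tendsto (fun ε ↦ kappaFactor q k (s + t₁ * ε) (s + t₂ * ε) (x + y₁ * ε) (x + y₂ * ε))
      (𝓝 0) (𝓝 ((1 - q ^ (k + 2)) / (1 - q ^ (k + 1)))) := by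
  have hQ : |q ^ (k + 1)| < 1 := by rw [abs_pow]; exact pow_lt_one₀ (abs_nonneg q) hq (by omega)
  have hφ := phiStarAt_self_pos (abs_lt.1 hq).2.le hs hx hQ
  have hcont : ContinuousAt
      (fun ε ↦ kappaFactor q k (s + t₁ * ε) (s + t₂ * ε) (x + y₁ * ε) (x + y₂ * ε)) 0 := by
    simp only [kappaFactor]
    refine ContinuousAt.div (by unfold psiStar; fun_prop) (by unfold phiStar; fun_prop) ?_
    simpa [phiStar_eq_phiStarAt] using hφ.ne'
  convert hcont.tendsto using 2
  simp only [mul_zero, add_zero, kappaFactor, psiStar_eq_psiStarAt, phiStar_eq_phiStarAt]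
  rw [div_eq_div_iff (one_sub_pow_succ_pos hq k).ne' hφ.ne', psiStarAt_self, phiStarAt_self,
    pow_succ' q (k + 1)]
  ring

theorem tendsto_tprod_kappaFactor_rescaled {q s x : ℝ} (hq : |q| < 1) (hs : 0 < s)
    (hx : (1 - q) * x ^ 2 < 4 * s) (t₁ t₂ y₁ y₂ : ℝ) :
    Tendsto (fun ε ↦ ∏' k, kappaFactor q k (s + t₁ * ε) (s + t₂ * ε) (x + y₁ * ε) (x + y₂ * ε))
      (𝓝[>] 0) (𝓝 (1 - q)⁻¹) := by
  obtain ⟨C, hC⟩ := exists_eventually_abs_log_kappaFactor_le hq hs hx t₁ t₂ y₁ y₂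
  exact tendsto_tprod_of_dominated_convergence
    ((summable_nat_add_iff 1).2 (summable_geometric_of_lt_one (abs_nonneg q) hq) |>.mul_left C)
    (fun k ↦ div_pos (one_sub_pow_succ_pos hq (k + 1)) (one_sub_pow_succ_pos hq k))
    (fun k ↦ (tendsto_kappaFactor_rescaled hq hs hx t₁ t₂ y₁ y₂ k).mono_left nhdsWithin_le_nhds)
    (eventually_nhdsWithin_of_eventually_nhds hC) (tendsto_prod_range_one_sub_pow_div hq)

theorem phiStar_zero_rescaled (q s x t₁ t₂ y₁ y₂ ε : ℝ) :
    phiStar q 0 (s + t₁ * ε) (s + t₂ * ε) (x + y₁ * ε) (x + y₂ * ε)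
      = ε ^ 2 * ((t₂ - t₁) ^ 2 + (1 - q) * (s * (y₂ - y₁) ^ 2 - (t₂ - t₁) * (y₂ - y₁) * x)
        + (1 - q) * (y₂ - y₁) * (t₁ * y₂ - t₂ * y₁) * ε) := by
  rw [phiStar]; ring

theorem one_sub_mul_sq_lt_of_abs_lt {q s x : ℝ} (hq : q < 1) (hx : |x| < 2 * √(s / (1 - q))) :
    (1 - q) * x ^ 2 < 4 * s := by
  have h : (|x| / 2) ^ 2 < s / (1 - q) := (lt_sqrt (by positivity)).1 (by linarith)
  rw [div_pow, sq_abs, lt_div_iff₀ (by linarith)] at h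
  linarith

theorem sq_add_one_sub_mul_pos {q s x T Y : ℝ} (hq : q < 1) (hx : (1 - q) * x ^ 2 < 4 * s)
    (hT : T ≠ 0) : 0 < T ^ 2 + (1 - q) * (s * Y ^ 2 - T * Y * x) := by
  have h : 4 * (T ^ 2 + (1 - q) * (s * Y ^ 2 - T * Y * x))
      = (2 * T - (1 - q) * x * Y) ^ 2 + (1 - q) * Y ^ 2 * (4 * s - (1 - q) * x ^ 2) := by ring
  rcases eq_or_ne Y 0 with rfl | hY
  · simpa using sq_pos_of_ne_zero hT
  · have : 0 < (1 - q) * Y ^ 2 * (4 * s - (1 - q) * x ^ 2) := by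
      have : 0 < 1 - q := by linarith
      have : 0 < 4 * s - (1 - q) * x ^ 2 := by linarith
      positivity
    nlinarith [sq_nonneg (2 * T - (1 - q) * x * Y)]

theorem stmt19_general (q : ℝ) (hq : q ∈ Set.Ioo (-1:ℝ) 1) (s : ℝ) (hs : 0 < s)
    (x : ℝ) (hx : |x| < 2 * Real.sqrt (s/(1-q)))
    (t₁ t₂ : ℝ) (ht : t₁ < t₂) (y₁ y₂ : ℝ) :
    Filter.Tendsto
      (fun ε : ℝ => ε * kappaQ q (s + t₁*ε) (s + t₂*ε) (x + y₁*ε) (x + y₂*ε))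
      (nhdsWithin 0 (Set.Ioi 0))
      (nhds ((1/(2*Real.pi)) * (Real.sqrt (1-q) * (t₂-t₁) * Real.sqrt (4*s - (1-q)*x^2))
        / ((t₂-t₁)^2 + (1-q)*(s*(y₂-y₁)^2 - (t₂-t₁)*(y₂-y₁)*x)))) := by
  have hq' : |q| < 1 := abs_lt.2 hq
  have h1q : 1 - q ≠ 0 := by linarith [hq.2]
  have hx' := one_sub_mul_sq_lt_of_abs_lt hq.2 hx
  set D := (t₂ - t₁) ^ 2 + (1 - q) * (s * (y₂ - y₁) ^ 2 - (t₂ - t₁) * (y₂ - y₁) * x)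
  have hD : 0 < D := sq_add_one_sub_mul_pos hq.2 hx' (sub_ne_zero.2 ht.ne')
  have hroot : ContinuousAt (fun ε ↦ √(4 * (s + t₂ * ε) - (1 - q) * (x + y₂ * ε) ^ 2)
      / (D + (1 - q) * (y₂ - y₁) * (t₁ * y₂ - t₂ * y₁) * ε)) 0 :=
    ContinuousAt.div (by fun_prop) (by fun_prop) (by simpa using hD.ne')
  have hlim := (tendsto_const_nhds (x := (1 - q) ^ ((3 : ℝ) / 2) * (t₂ - t₁) / (2 * π))).mul
    (hroot.tendsto.mono_left nhdsWithin_le_nhds)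
    |>.mul (tendsto_tprod_kappaFactor_rescaled hq' hs hx' t₁ t₂ y₁ y₂)
  convert hlim.congr' _ using 2
  · rw [show (3 : ℝ) / 2 = 1 + 1 / 2 by norm_num, rpow_add (by linarith [hq.2]), rpow_one,
      ← sqrt_eq_rpow]
    simp only [mul_zero, add_zero]
    field_simp
  · filter_upwards [self_mem_nhdsWithin] with ε (hε : 0 < ε)
    rw [kappaQ, phiStar_zero_rescaled]
    field_simp
    simp only [D, kappaFactor]
    ring

theorem stmt19 (q : ℝ) (hq : q ∈ Set.Ioo (-1:ℝ) 1) (s : ℝ) (hs : 0 < s)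
    (x : ℝ) (hx : |x| < 2 * Real.sqrt (s/(1-q)))
    (t₁ t₂ : ℝ) (ht₁ : 0 ≤ t₁) (ht : t₁ < t₂) (y₁ y₂ : ℝ) :
    Filter.Tendsto
      (fun ε : ℝ => ε * kappaQ q (s + t₁*ε) (s + t₂*ε) (x + y₁*ε) (x + y₂*ε))
      (nhdsWithin 0 (Set.Ioi 0))
      (nhds ((1/(2*Real.pi)) * (Real.sqrt (1-q) * (t₂-t₁) * Real.sqrt (4*s - (1-q)*x^2))
        / ((t₂-t₁)^2 + (1-q)*(s*(y₂-y₁)^2 - (t₂-t₁)*(y₂-y₁)*x)))) :=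
  stmt19_general q hq s hs x hx t₁ t₂ ht y₁ y₂
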